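/- Let F: ℝ^d → ℝ be differentiable with L-Lipschitz gradient, and let g_1, …, g_N ∈ ℝ^d with nonnegative weights p_1, …, p_N summing to 1, and G = Σ_i p_i g_i. Then for any w ∈ ℝ^d, F(w − G) ≤ F(w) − (1/2)‖∇F(w)‖² + (1/2)Σ_i p_i ‖g_i − ∇F(w)‖² + ((L−1)/2)·Σ_i p_i ‖g_i‖², provided L ≥ 1. -/

import Mathlib

/-!
The descent lemma gives `F (w - G) ≤ F w - ⟪∇F w, G⟫ + L / 2 * ‖G‖ ^ 2`. Polarization,
`2 ⟪∇F w, G⟫ = ‖∇F w‖ ^ 2 + ‖G‖ ^ 2 - ‖G - ∇F w‖ ^ 2`, together with the split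
`L / 2 = 1 / 2 + (L - 1) / 2`, turns this into a bound in `‖G - ∇F w‖ ^ 2` and `‖G‖ ^ 2`.
Since `G - ∇F w = ∑ i, p i • (g i - ∇F w)`, Jensen's inequality for the convex function `‖·‖ ^ 2`
bounds both squares by the corresponding `p`-averages (the second one with the weight
`(L - 1) / 2 ≥ 0`).
-/

open scoped RealInnerProductSpace

section Normed

variable {E : Type*} [SeminormedAddCommGroup E] [NormedSpace ℝ E]

theorem sq_norm_sum_smul_le {ι : Type*} {s : Finset ι} {p : ι → ℝ} (hp : ∀ i ∈ s, 0 ≤ p i)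
    (hsum : ∑ i ∈ s, p i = 1) (g : ι → E) :
    ‖∑ i ∈ s, p i • g i‖ ^ 2 ≤ ∑ i ∈ s, p i * ‖g i‖ ^ 2 :=
  (convexOn_univ_norm.pow (fun _ _ ↦ norm_nonneg _) 2).map_sum_le hp hsum fun _ _ ↦ trivial

end Normed

section InnerProduct

variable {E : Type*} [NormedAddCommGroup E] [InnerProductSpace ℝ E] [CompleteSpace E]
  {F : E → ℝ} {gradF : E → E} {L : ℝ}

theorem hasDerivAt_apply_add_smul (x v : E) {t : ℝ}
    (hF : HasGradientAt F (gradF (x + t • v)) (x + t • v)) :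
    HasDerivAt (fun s : ℝ ↦ F (x + s • v)) ⟪gradF (x + t • v), v⟫ t := by
  have hline : HasDerivAt (fun s : ℝ ↦ x + s • v) v t := by
    simpa using ((hasDerivAt_id t).smul_const v).const_add x
  have hcomp : HasDerivAt (F ∘ fun s : ℝ ↦ x + s • v) ⟪gradF (x + t • v), v⟫ t := by
    simpa [InnerProductSpace.toDual_apply_apply] using hF.hasFDerivAt.comp_hasDerivAt t hline
  exact hcomp

/-- The descent lemma: `t ↦ F (x + t • v) - t * ⟪∇F x, v⟫ - L / 2 * t ^ 2 * ‖v‖ ^ 2` has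
nonpositive derivative for `t ≥ 0`, so its value at `1` is at most its value at `0`. -/
theorem apply_le_add_inner_add_of_lipschitz_gradient {x : E}
    (hgrad : ∀ y, HasGradientAt F (gradF y) y)
    (hlip : ∀ y, ‖gradF y - gradF x‖ ≤ L * ‖y - x‖) (y : E) :
    F y ≤ F x + ⟪gradF x, y - x⟫ + L / 2 * ‖y - x‖ ^ 2 := by
  set v := y - x
  set φ : ℝ → ℝ := fun t ↦ F (x + t • v) - t * ⟪gradF x, v⟫ - L / 2 * t ^ 2 * ‖v‖ ^ 2
  have hφ : ∀ t, HasDerivAt φ (⟪gradF (x + t • v), v⟫ - ⟪gradF x, v⟫ - L * t * ‖v‖ ^ 2) t := by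
    intro t
    refine (((hasDerivAt_apply_add_smul x v (hgrad _)).sub
      ((hasDerivAt_id t).mul_const ⟪gradF x, v⟫)).sub
      (((hasDerivAt_pow 2 t).const_mul (L / 2)).mul_const (‖v‖ ^ 2))).congr_deriv ?_
    simp only [Nat.cast_ofNat]
    ring
  have hφ' : ∀ t ∈ interior (Set.Ici (0 : ℝ)),
      ⟪gradF (x + t • v), v⟫ - ⟪gradF x, v⟫ - L * t * ‖v‖ ^ 2 ≤ 0 := by
    intro t ht
    rw [interior_Ici] at ht
    have hstep : ‖gradF (x + t • v) - gradF x‖ ≤ L * (t * ‖v‖) := by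
      simpa [norm_smul, abs_of_pos (Set.mem_Ioi.mp ht)] using hlip (x + t • v)
    suffices ⟪gradF (x + t • v), v⟫ - ⟪gradF x, v⟫ ≤ L * t * ‖v‖ ^ 2 by linarith
    calc ⟪gradF (x + t • v), v⟫ - ⟪gradF x, v⟫ = ⟪gradF (x + t • v) - gradF x, v⟫ :=
          (inner_sub_left _ _ _).symm
      _ ≤ ‖gradF (x + t • v) - gradF x‖ * ‖v‖ := real_inner_le_norm _ _
      _ ≤ L * (t * ‖v‖) * ‖v‖ := by gcongr
      _ = L * t * ‖v‖ ^ 2 := by ring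
  have hanti : AntitoneOn φ (Set.Ici 0) :=
    antitoneOn_of_hasDerivWithinAt_nonpos (convex_Ici 0)
      (fun t _ ↦ (hφ t).continuousAt.continuousWithinAt) (fun t _ ↦ (hφ t).hasDerivWithinAt) hφ'
  have hφ01 : φ 1 ≤ φ 0 := hanti Set.self_mem_Ici (Set.mem_Ici.mpr zero_le_one) zero_le_one
  simp only [φ, v, one_smul, zero_smul, add_zero, add_sub_cancel, one_mul, zero_mul, one_pow,
    mul_one, sub_zero] at hφ01
  linarith

theorem apply_sub_le_of_lipschitz_gradient {x : E}
    (hgrad : ∀ y, HasGradientAt F (gradF y) y)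
    (hlip : ∀ y, ‖gradF y - gradF x‖ ≤ L * ‖y - x‖) (u : E) :
    F (x - u) ≤ F x - 1 / 2 * ‖gradF x‖ ^ 2 + 1 / 2 * ‖u - gradF x‖ ^ 2
      + (L - 1) / 2 * ‖u‖ ^ 2 := by
  have hdescent := apply_le_add_inner_add_of_lipschitz_gradient hgrad hlip (x - u)
  rw [sub_sub_cancel_left, inner_neg_right, norm_neg] at hdescent
  have hpolar := norm_sub_sq_real u (gradF x)
  rw [real_inner_comm] at hpolar
  linarith

end InnerProduct

theorem fedavg_aggregated_bound {d N : ℕ} (F : EuclideanSpace ℝ (Fin d) → ℝ)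
    (gradF : EuclideanSpace ℝ (Fin d) → EuclideanSpace ℝ (Fin d))
    (hgrad : ∀ w, HasGradientAt F (gradF w) w)
    (L : ℝ) (hL : 1 ≤ L)
    (hlip : ∀ w w', ‖gradF w - gradF w'‖ ≤ L * ‖w - w'‖)
    (g : Fin N → EuclideanSpace ℝ (Fin d))
    (p : Fin N → ℝ) (hp : ∀ i, 0 ≤ p i) (hsum : ∑ i, p i = 1) :
    ∀ w : EuclideanSpace ℝ (Fin d),
      F (w - ∑ i, p i • g i) ≤ F w - (1 / 2) * ‖gradF w‖ ^ 2
        + (1 / 2) * ∑ i, p i * ‖g i - gradF w‖ ^ 2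
        + ((L - 1) / 2) * ∑ i, p i * ‖g i‖ ^ 2 := by
  intro w
  have hdrift : ∑ i, p i • g i - gradF w = ∑ i, p i • (g i - gradF w) := by
    simp [smul_sub, Finset.sum_sub_distrib, ← Finset.sum_smul, hsum]
  have hjensen_drift := sq_norm_sum_smul_le (fun i _ ↦ hp i) hsum (fun i ↦ g i - gradF w)
  have hjensen_step := sq_norm_sum_smul_le (fun i _ ↦ hp i) hsum g
  rw [← hdrift] at hjensen_drift
  calc F (w - ∑ i, p i • g i)
      ≤ F w - 1 / 2 * ‖gradF w‖ ^ 2 + 1 / 2 * ‖∑ i, p i • g i - gradF w‖ ^ 2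
        + (L - 1) / 2 * ‖∑ i, p i • g i‖ ^ 2 :=
        apply_sub_le_of_lipschitz_gradient hgrad (fun y ↦ hlip y w) _
    _ ≤ _ := by gcongr
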